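/- Let ν ≥ 1 be an integer and let p be a source with p(1) ≥ 2^{−ν}. Then every codeword-length vector l ∈ ℒ_n with R*(l,p) = R*_opt(p) satisfies l(1) ≤ ν. -/

import Mathlib

/-- A source: a positive, monotonically nonincreasing probability mass function on `Fin n`. -/
def IsSource (n : ℕ) (p : Fin n → ℝ) : Prop :=
  (∀ i, 0 < p i) ∧ (∑ i, p i = 1) ∧ (∀ i j : Fin n, i ≤ j → p j ≤ p i)

/-- A codeword-length vector: positive integer lengths satisfying the Kraft inequality. -/
def IsCLV (n : ℕ) (l : Fin n → ℤ) : Prop :=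
  (∀ i, 1 ≤ l i) ∧ (∑ i, (2:ℝ) ^ (-(l i)) ≤ 1)

/-- Maximum pointwise redundancy `R*(l,p) = max_i (l(i) + lg p(i))`. -/
noncomputable def Rstar (n : ℕ) (l : Fin n → ℤ) (p : Fin n → ℝ) : ℝ :=
  ⨆ i : Fin n, ((l i : ℝ) + Real.logb 2 (p i))

/-- Minimum maximum pointwise redundancy over all codeword-length vectors. -/
noncomputable def RstarOpt (n : ℕ) (p : Fin n → ℝ) : ℝ :=
  sInf {r : ℝ | ∃ l : Fin n → ℤ, IsCLV n l ∧ Rstar n l p = r}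

/-! The Shannon code `⌈-lg p(i)⌉` satisfies the Kraft inequality and has maximum pointwise
redundancy `< 1`, so `R*_opt(p) < 1`. On the other hand `l(1) ≥ ν + 1` together with
`lg p(1) ≥ -ν` forces `R*(l,p) ≥ l(1) + lg p(1) ≥ 1`. -/

open Real

theorem zpow_le_iff_le_logb {b x : ℝ} (hb : 1 < b) (hx : 0 < x) (k : ℤ) :
    b ^ k ≤ x ↔ (k : ℝ) ≤ logb b x := by
  rw [le_logb_iff_rpow_le hb hx, rpow_intCast]

theorem lt_one_of_sum_eq_one {ι : Type*} [Fintype ι] {p : ι → ℝ} (hpos : ∀ i, 0 < p i)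
    (hsum : ∑ i, p i = 1) {i j : ι} (hij : j ≠ i) : p i < 1 :=
  hsum ▸ Finset.single_lt_sum hij (Finset.mem_univ i) (Finset.mem_univ j) (hpos j)
    fun k _ _ ↦ (hpos k).le

section Redundancy

variable {n : ℕ}

theorem le_Rstar (l : Fin n → ℤ) (p : Fin n → ℝ) (i : Fin n) :
    (l i : ℝ) + logb 2 (p i) ≤ Rstar n l p :=
  le_ciSup (f := fun i ↦ (l i : ℝ) + logb 2 (p i)) (Set.finite_range _).bddAbove i

theorem Rstar_lt_iff [NeZero n] (l : Fin n → ℤ) (p : Fin n → ℝ) (r : ℝ) :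
    Rstar n l p < r ↔ ∀ i, (l i : ℝ) + logb 2 (p i) < r := by
  rw [Rstar, ← sSup_range, Set.Finite.csSup_lt_iff (Set.finite_range _) (Set.range_nonempty _),
    Set.forall_mem_range]

theorem RstarOpt_le_Rstar [NeZero n] (p : Fin n → ℝ) {l : Fin n → ℤ} (hl : IsCLV n l) :
    RstarOpt n p ≤ Rstar n l p := by
  refine csInf_le ⟨1 + logb 2 (p 0), ?_⟩ ⟨l, hl, rfl⟩
  rintro _ ⟨l', ⟨hl'_pos, -⟩, rfl⟩
  have hl'0 : (1 : ℝ) ≤ l' 0 := by exact_mod_cast hl'_pos 0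
  linarith [le_Rstar l' p 0]

noncomputable def shannonLengths (p : Fin n → ℝ) (i : Fin n) : ℤ :=
  ⌈-logb 2 (p i)⌉

theorem zpow_neg_shannonLengths_le {p : Fin n → ℝ} (hpos : ∀ i, 0 < p i) (i : Fin n) :
    (2 : ℝ) ^ (-shannonLengths p i) ≤ p i := by
  rw [zpow_le_iff_le_logb one_lt_two (hpos i), Int.cast_neg, neg_le]
  exact Int.le_ceil _

theorem isCLV_shannonLengths {p : Fin n → ℝ} (hn : 2 ≤ n) (hpos : ∀ i, 0 < p i)
    (hsum : ∑ i, p i = 1) : IsCLV n (shannonLengths p) := by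
  refine ⟨fun i ↦ Int.ceil_pos.mpr ?_, ?_⟩
  · obtain ⟨j, hji⟩ : ∃ j : Fin n, j ≠ i := Fintype.exists_ne_of_one_lt_card (by simpa) i
    linarith [logb_neg one_lt_two (hpos i) (lt_one_of_sum_eq_one hpos hsum hji)]
  · exact hsum ▸ Finset.sum_le_sum fun i _ ↦ zpow_neg_shannonLengths_le hpos i

theorem Rstar_shannonLengths_lt_one [NeZero n] (p : Fin n → ℝ) :
    Rstar n (shannonLengths p) p < 1 := by
  refine (Rstar_lt_iff _ _ _).mpr fun i ↦ ?_
  have := Int.ceil_lt_add_one (-logb 2 (p i))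
  rw [shannonLengths]
  linarith

theorem RstarOpt_lt_one {p : Fin n → ℝ} (hn : 2 ≤ n) (hp : IsSource n p) :
    RstarOpt n p < 1 := by
  have : NeZero n := ⟨by omega⟩
  obtain ⟨hpos, hsum, -⟩ := hp
  exact (RstarOpt_le_Rstar p (isCLV_shannonLengths hn hpos hsum)).trans_lt
    (Rstar_shannonLengths_lt_one p)

end Redundancy

theorem stmt15 (n : ℕ) (hn : 2 ≤ n) (ν : ℕ)
    (p : Fin n → ℝ) (hp : IsSource n p)
    (h1 : (2:ℝ) ^ (-(ν:ℤ)) ≤ p ⟨0, by omega⟩)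
    (l : Fin n → ℤ) (hopt : Rstar n l p = RstarOpt n p) :
    l ⟨0, by omega⟩ ≤ (ν:ℤ) := by
  by_contra! hlong
  have hlog : -(ν : ℝ) ≤ logb 2 (p ⟨0, by omega⟩) := by
    exact_mod_cast (zpow_le_iff_le_logb one_lt_two (hp.1 _) _).mp h1
  have hl0 : (ν : ℝ) + 1 ≤ l ⟨0, by omega⟩ := by exact_mod_cast hlong
  have hR : 1 ≤ Rstar n l p := by linarith [le_Rstar l p ⟨0, by omega⟩]
  linarith [RstarOpt_lt_one hn hp]
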